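/- arXiv:2501.18082 — 2 statements merged into one kernel-verified Lean document; each statement's English description precedes it below -/
import Mathlib

section
/- Let A_i, B_i (i = 1,…,n) be smooth nowhere-zero functions on an open set W ⊆ ℝⁿ, and suppose that for all i, j the functions (A_i B_j − A_j B_i) are divisible by a smooth nowhere-zero function φ with the quotient independent of x^i. Further assume A_i and B_i are independent of x^i and define operators P = Σ_i (A_i/φ) ∂_i², Q = Σ_i (B_i/φ) ∂_i². If the symbols Σ_i (A_i/φ) p_i² and Σ_i (B_i/φ) p_i² Poisson commute and ∂_i[(A_i B_j − A_j B_i)/φ] = 0 for all i, j, then [P, Q] = 0. -/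
open Function Matrix

noncomputable def pd {n : ℕ} (i : Fin n) (f : (Fin n → ℝ) → ℝ) (x : Fin n → ℝ) : ℝ :=
  deriv (fun t : ℝ => f (Function.update x i t)) (x i)

noncomputable def pbr {n : ℕ} (H F : (Fin n → ℝ) → (Fin n → ℝ) → ℝ)
    (x p : Fin n → ℝ) : ℝ :=
  ∑ i, (pd i (fun q => H x q) p * pd i (fun y => F y p) x
        - pd i (fun y => H y p) x * pd i (fun q => F x q) p)

noncomputable def Dd {n : ℕ} (i : Fin n) (f : (Fin n → ℝ) → ℝ) (x : Fin n → ℝ) : ℝ :=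
  fderiv ℝ f x (Pi.single i 1)

lemma pd_eq_Dd {n : ℕ} (i : Fin n) {f : (Fin n → ℝ) → ℝ} {x : Fin n → ℝ}
    (hf : DifferentiableAt ℝ f x) : pd i f x = Dd i f x := by
  have hu : Function.update x i (x i) = x := Function.update_eq_self i x
  have hf' : HasFDerivAt f (fderiv ℝ f x) (Function.update x i (x i)) := by
    rw [hu]; exact hf.hasFDerivAt
  have h := hf'.comp_hasDerivAt (x i) (hasDerivAt_update x i (x i))
  simpa [pd, Dd, Function.comp_def] using h.deriv

lemma pd_congr_nhds {n : ℕ} (i : Fin n) {f g : (Fin n → ℝ) → ℝ} {x : Fin n → ℝ}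
    (h : f =ᶠ[nhds x] g) : pd i f x = pd i g x := by
  have hc : ContinuousAt (fun t : ℝ => Function.update x i t) (x i) :=
    (hasDerivAt_update x i (x i)).continuousAt
  have h2 : (fun t : ℝ => f (Function.update x i t)) =ᶠ[nhds (x i)]
      (fun t : ℝ => g (Function.update x i t)) := by
    have := hc.preimage_mem_nhds (t := {y | f y = g y})
      (show {y | f y = g y} ∈ nhds (Function.update x i (x i)) by
        rw [Function.update_eq_self]; exact h)
    filter_upwards [this] with t ht using ht
  exact h2.deriv_eq

section layer2
variable {n : ℕ} {W : Set (Fin n → ℝ)}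

abbrev Sm (W : Set (Fin n → ℝ)) (f : (Fin n → ℝ) → ℝ) : Prop :=
  ContDiffOn ℝ ((⊤:ℕ∞) : WithTop ℕ∞) f W

lemma Sm.diffAt (hW : IsOpen W) {f : (Fin n → ℝ) → ℝ} (hf : Sm W f) {x : Fin n → ℝ}
    (hx : x ∈ W) : DifferentiableAt ℝ f x :=
  (hf.contDiffAt (hW.mem_nhds hx)).differentiableAt (by simp)

lemma Sm.Dd (hW : IsOpen W) {f : (Fin n → ℝ) → ℝ} (hf : Sm W f) (i : Fin n) :
    Sm W (Dd i f) := by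
  have h1 : ContDiffOn ℝ ((⊤:ℕ∞) : WithTop ℕ∞) (fderiv ℝ f) W :=
    hf.fderiv_of_isOpen hW (by exact_mod_cast le_top)
  exact h1.clm_apply contDiffOn_const

lemma Dd_congr {f g : (Fin n → ℝ) → ℝ} {x : Fin n → ℝ} (i : Fin n)
    (h : f =ᶠ[nhds x] g) : Dd i f x = Dd i g x := by
  unfold Dd; rw [h.fderiv_eq]

lemma Dd_symm (hW : IsOpen W) {f : (Fin n → ℝ) → ℝ} (hf : Sm W f) {x : Fin n → ℝ}
    (hx : x ∈ W) (i j : Fin n) : Dd i (Dd j f) x = Dd j (Dd i f) x := by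
  have hc : ContDiffAt ℝ ((⊤:ℕ∞) : WithTop ℕ∞) f x := hf.contDiffAt (hW.mem_nhds hx)
  have hsym := hc.isSymmSndFDerivAt
    (by simp only [minSmoothness_of_isRCLikeNormedField]; exact WithTop.coe_le_coe.mpr (le_top : (2:ℕ∞) ≤ ⊤))
  have hder : DifferentiableAt ℝ (fderiv ℝ f) x :=
    (hc.fderiv_right (m := ((⊤:ℕ∞) : WithTop ℕ∞)) (by norm_cast)).differentiableAt (by simp)
  have key : ∀ v : Fin n → ℝ, fderiv ℝ (fun y => fderiv ℝ f y v) x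
      = (fderiv ℝ (fderiv ℝ f) x).flip v := by
    intro v
    rw [fderiv_clm_apply hder (differentiableAt_const v)]
    simp
  unfold Dd
  rw [show (fun y => fderiv ℝ f y (Pi.single j 1)) = fun y => fderiv ℝ f y (Pi.single j 1) from rfl,
    key, key]
  exact hsym _ _

lemma Dd_mul {u v : (Fin n → ℝ) → ℝ} {x : Fin n → ℝ} (i : Fin n)
    (hu : DifferentiableAt ℝ u x) (hv : DifferentiableAt ℝ v x) :
    Dd i (fun y => u y * v y) x = u x * Dd i v x + v x * Dd i u x := by
  unfold Dd; rw [fderiv_fun_mul hu hv]; simp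

lemma Dd_sum {F : Fin n → (Fin n → ℝ) → ℝ} {x : Fin n → ℝ} (i : Fin n)
    (hF : ∀ j, DifferentiableAt ℝ (F j) x) :
    Dd i (fun y => ∑ j, F j y) x = ∑ j, Dd i (F j) x := by
  unfold Dd; rw [fderiv_fun_sum (fun j _ => hF j)]; simp

lemma Dd_div {u v : (Fin n → ℝ) → ℝ} {x : Fin n → ℝ} (i : Fin n)
    (hu : DifferentiableAt ℝ u x) (hv : DifferentiableAt ℝ v x) (hvx : v x ≠ 0) :
    Dd i (fun y => u y / v y) x
      = (Dd i u x * v x - u x * Dd i v x) / (v x)^2 := by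
  have hinv : Dd i (fun y => (v y)⁻¹) x = -(v x ^ 2)⁻¹ * Dd i v x := by
    have h := (hasDerivAt_inv hvx).comp_hasFDerivAt x hv.hasFDerivAt
    have h2 : HasFDerivAt (fun y => (v y)⁻¹) (-(v x ^ 2)⁻¹ • fderiv ℝ v x) x := h
    unfold Dd
    rw [h2.fderiv]
    simp
  have hvinv : DifferentiableAt ℝ (fun y => (v y)⁻¹) x := hv.inv hvx
  have hm := Dd_mul i hu hvinv
  have : (fun y => u y / v y) = fun y => u y * (v y)⁻¹ := by
    funext y; rw [div_eq_mul_inv]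
  rw [this, hm, hinv]
  field_simp
  ring

end layer2

section layer3
variable {n : ℕ} {W : Set (Fin n → ℝ)}

lemma Dd_congrW (hW : IsOpen W) {f g : (Fin n → ℝ) → ℝ} (h : ∀ y ∈ W, f y = g y)
    {x : Fin n → ℝ} (hx : x ∈ W) (i : Fin n) : Dd i f x = Dd i g x :=
  Dd_congr i (Filter.eventually_iff_exists_mem.mpr ⟨W, hW.mem_nhds hx, h⟩)

lemma Dd_add {u v : (Fin n → ℝ) → ℝ} {x : Fin n → ℝ} (i : Fin n)
    (hu : DifferentiableAt ℝ u x) (hv : DifferentiableAt ℝ v x) :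
    Dd i (fun y => u y + v y) x = Dd i u x + Dd i v x := by
  unfold Dd; rw [fderiv_fun_add hu hv]; simp

lemma Dd_mul_const {u : (Fin n → ℝ) → ℝ} {x : Fin n → ℝ} (i : Fin n)
    (hu : DifferentiableAt ℝ u x) (k : ℝ) :
    Dd i (fun y => u y * k) x = Dd i u x * k := by
  unfold Dd; rw [fderiv_mul_const hu]; simp [mul_comm]

lemma pdpd_eq_DdDd (hW : IsOpen W) {g : (Fin n → ℝ) → ℝ} (hg : Sm W g)
    {x : Fin n → ℝ} (hx : x ∈ W) (i : Fin n) :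
    pd i (pd i g) x = Dd i (Dd i g) x := by
  have h2 : pd i g =ᶠ[nhds x] Dd i g :=
    Filter.eventually_iff_exists_mem.mpr
      ⟨W, hW.mem_nhds hx, fun y hy => pd_eq_Dd i (hg.diffAt hW hy)⟩
  rw [pd_congr_nhds i h2, pd_eq_Dd i ((hg.Dd hW i).diffAt hW hx)]

lemma pdpd_congrW (hW : IsOpen W) {f g : (Fin n → ℝ) → ℝ} (h : ∀ y ∈ W, f y = g y)
    {x : Fin n → ℝ} (hx : x ∈ W) (i : Fin n) :
    pd i (pd i f) x = pd i (pd i g) x := by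
  have h1 : ∀ y ∈ W, pd i f y = pd i g y := fun y hy =>
    pd_congr_nhds i (Filter.eventually_iff_exists_mem.mpr ⟨W, hW.mem_nhds hy, h⟩)
  exact pd_congr_nhds i (Filter.eventually_iff_exists_mem.mpr ⟨W, hW.mem_nhds hx, h1⟩)

lemma deriv_quad (c p : Fin n → ℝ) (i : Fin n) :
    deriv (fun t : ℝ => ∑ j, c j * (Function.update p i t j)^2) (p i)
      = 2 * c i * p i := by
  have h : HasDerivAt (fun t : ℝ => ∑ j, c j * (Function.update p i t j)^2)
      (∑ j, if j = i then 2 * c i * p i else 0) (p i) := by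
    apply HasDerivAt.fun_sum
    intro j _
    rcases eq_or_ne j i with hj | hj
    · subst hj
      simp only [if_pos rfl]
      have : (fun t : ℝ => c j * (Function.update p j t j)^2)
          = fun t : ℝ => c j * t^2 := by
        funext t; rw [Function.update_self]
      rw [this]
      simpa [mul_comm, mul_assoc, mul_left_comm] using
        ((hasDerivAt_pow 2 (p j)).const_mul (c j))
    · have : (fun t : ℝ => c j * (Function.update p i t j)^2)
          = fun _ : ℝ => c j * (p j)^2 := by
        funext t; rw [Function.update_of_ne hj]
      rw [this, if_neg hj]
      exact hasDerivAt_const _ _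
  simpa [Finset.sum_ite_eq'] using h.deriv

lemma cubic_coeff {e0 e1 e2 e3 : ℝ}
    (h : ∀ t : ℝ, e0 + e1 * t + e2 * t^2 + e3 * t^3 = 0) : e2 = 0 := by
  have h0 := h 0
  have h1 := h 1
  have h2 := h (-1)
  norm_num at h0 h1 h2
  linarith

lemma sym4 (hW : IsOpen W) {f : (Fin n → ℝ) → ℝ} (hf : Sm W f)
    {x : Fin n → ℝ} (hx : x ∈ W) (i j : Fin n) :
    Dd i (Dd i (Dd j (Dd j f))) x = Dd j (Dd j (Dd i (Dd i f))) x := by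
  have Sf1 : ∀ k, Sm W (Dd k f) := fun k => hf.Dd hW k
  have Sf2 : ∀ k l, Sm W (Dd k (Dd l f)) := fun k l => (Sf1 l).Dd hW k
  calc Dd i (Dd i (Dd j (Dd j f))) x
      = Dd i (Dd j (Dd i (Dd j f))) x := by
        refine Dd_congrW hW (fun y hy => ?_) hx i
        exact Dd_symm hW (Sf1 j) hy i j
    _ = Dd i (Dd j (Dd j (Dd i f))) x := by
        refine Dd_congrW hW (fun y hy => ?_) hx i
        refine Dd_congrW hW (fun z hz => ?_) hy j
        exact Dd_symm hW hf hz i j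
    _ = Dd j (Dd i (Dd j (Dd i f))) x := Dd_symm hW (Sf2 j i) hx i j
    _ = Dd j (Dd j (Dd i (Dd i f))) x := by
        refine Dd_congrW hW (fun y hy => ?_) hx j
        exact Dd_symm hW (Sf1 i) hy i j

lemma expand2 (hW : IsOpen W) {u s : Fin n → (Fin n → ℝ) → ℝ}
    (hu : ∀ j, Sm W (u j)) (hs : ∀ j, Sm W (s j))
    {x : Fin n → ℝ} (hx : x ∈ W) (i : Fin n) :
    Dd i (Dd i (fun y => ∑ j, u j y * s j y)) x
      = ∑ j, (u j x * Dd i (Dd i (s j)) x + 2 * Dd i (u j) x * Dd i (s j) x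
          + s j x * Dd i (Dd i (u j)) x) := by
  have du : ∀ j, ∀ y ∈ W, DifferentiableAt ℝ (u j) y := fun j y hy => (hu j).diffAt hW hy
  have ds : ∀ j, ∀ y ∈ W, DifferentiableAt ℝ (s j) y := fun j y hy => (hs j).diffAt hW hy
  have dDu : ∀ j, ∀ y ∈ W, DifferentiableAt ℝ (Dd i (u j)) y :=
    fun j y hy => ((hu j).Dd hW i).diffAt hW hy
  have dDs : ∀ j, ∀ y ∈ W, DifferentiableAt ℝ (Dd i (s j)) y :=
    fun j y hy => ((hs j).Dd hW i).diffAt hW hy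
  set g : (Fin n → ℝ) → ℝ :=
    fun y => ∑ j, (u j y * Dd i (s j) y + s j y * Dd i (u j) y) with hg
  have h1 : ∀ y ∈ W, Dd i (fun z => ∑ j, u j z * s j z) y = g y := by
    intro y hy
    rw [hg, Dd_sum (F := fun j z => u j z * s j z) i (fun j => (du j y hy).mul (ds j y hy))]
    exact Finset.sum_congr rfl fun j _ => Dd_mul i (du j y hy) (ds j y hy)
  rw [Dd_congrW hW h1 hx i]
  have hdiffsummand : ∀ j : Fin n,
      DifferentiableAt ℝ (fun y => u j y * Dd i (s j) y + s j y * Dd i (u j) y) x :=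
    fun j => ((du j x hx).mul (dDs j x hx)).add ((ds j x hx).mul (dDu j x hx))
  rw [hg, Dd_sum i hdiffsummand]
  refine Finset.sum_congr rfl fun j _ => ?_
  rw [Dd_add (u := fun y => u j y * Dd i (s j) y) (v := fun y => s j y * Dd i (u j) y) i ((du j x hx).mul (dDs j x hx)) ((ds j x hx).mul (dDu j x hx)),
    Dd_mul i (du j x hx) (dDs j x hx), Dd_mul i (ds j x hx) (dDu j x hx)]
  ring

end layer3

section layer4
variable {n : ℕ} {W : Set (Fin n → ℝ)}

lemma Dd_zero {x : Fin n → ℝ} (i : Fin n) : Dd i (fun _ => (0:ℝ)) x = 0 := by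
  simp [Dd]

lemma Dd_sub {u v : (Fin n → ℝ) → ℝ} {x : Fin n → ℝ} (i : Fin n)
    (hu : DifferentiableAt ℝ u x) (hv : DifferentiableAt ℝ v x) :
    Dd i (fun y => u y - v y) x = Dd i u x - Dd i v x := by
  unfold Dd; rw [fderiv_fun_sub hu hv]; simp

lemma pd_quad_p (c p : Fin n → ℝ) (i : Fin n) :
    pd i (fun q => ∑ j, c j * q j ^ 2) p = 2 * c i * p i := by
  show deriv (fun t : ℝ => ∑ j, c j * (Function.update p i t j)^2) (p i) = 2 * c i * p i
  exact deriv_quad c p i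

lemma pd_quad_x (hW : IsOpen W) {u : Fin n → (Fin n → ℝ) → ℝ} (hu : ∀ j, Sm W (u j))
    {x : Fin n → ℝ} (hx : x ∈ W) (p : Fin n → ℝ) (i : Fin n) :
    pd i (fun y => ∑ j, u j y * p j ^ 2) x = ∑ j, Dd i (u j) x * p j ^ 2 := by
  have hd : DifferentiableAt ℝ (fun y => ∑ j, u j y * p j ^ 2) x :=
    DifferentiableAt.fun_sum (fun j _ => ((hu j).diffAt hW hx).mul_const _)
  rw [pd_eq_Dd i hd, Dd_sum i (fun j => ((hu j).diffAt hW hx).mul_const _)]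
  exact Finset.sum_congr rfl fun j _ => Dd_mul_const i ((hu j).diffAt hW hx) _

end layer4
theorem stmt5 {n : ℕ} (W : Set (Fin n → ℝ)) (hW : IsOpen W)
    (A B : Fin n → (Fin n → ℝ) → ℝ) (φ : (Fin n → ℝ) → ℝ)
    (hA : ∀ i, ContDiffOn ℝ (⊤ : ℕ∞) (A i) W) (hB : ∀ i, ContDiffOn ℝ (⊤ : ℕ∞) (B i) W)
    (hφ : ContDiffOn ℝ (⊤ : ℕ∞) φ W)
    (hA0 : ∀ i, ∀ x ∈ W, A i x ≠ 0) (hB0 : ∀ i, ∀ x ∈ W, B i x ≠ 0)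
    (hφ0 : ∀ x ∈ W, φ x ≠ 0)
    (hAind : ∀ i, ∀ x ∈ W, pd i (A i) x = 0)
    (hBind : ∀ i, ∀ x ∈ W, pd i (B i) x = 0)
    (hpois : ∀ x ∈ W, ∀ p : Fin n → ℝ,
      pbr (fun y q => ∑ i, (A i y / φ y) * (q i) ^ 2)
          (fun y q => ∑ i, (B i y / φ y) * (q i) ^ 2) x p = 0)
    (hdiv : ∀ i j, ∀ x ∈ W,
      pd i (fun y => (A i y * B j y - A j y * B i y) / φ y) x = 0)
    (P Q : ((Fin n → ℝ) → ℝ) → ((Fin n → ℝ) → ℝ))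
    (hP : ∀ f x, P f x = ∑ i, (A i x / φ x) * pd i (pd i f) x)
    (hQ : ∀ f x, Q f x = ∑ i, (B i x / φ x) * pd i (pd i f) x) :
    ∀ f : (Fin n → ℝ) → ℝ, ContDiffOn ℝ (⊤ : ℕ∞) f W → ∀ x ∈ W,
      P (Q f) x = Q (P f) x := by
  intro f hf x hx
  have hA' : ∀ i, Sm W (A i) := fun i => (hA i).of_le (by simp)
  have hB' : ∀ i, Sm W (B i) := fun i => (hB i).of_le (by simp)
  have hφ' : Sm W φ := hφ.of_le (by simp)
  have hf' : Sm W f := hf.of_le (by simp)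
  have Sa : ∀ i, Sm W (fun y => A i y / φ y) := fun i => (hA' i).div hφ' hφ0
  have Sb : ∀ i, Sm W (fun y => B i y / φ y) := fun i => (hB' i).div hφ' hφ0
  have Ss : ∀ j, Sm W (Dd j (Dd j f)) := fun j => (hf'.Dd hW j).Dd hW j
  -- K1 : the Poisson bracket condition, coefficient-wise
  have K1 : ∀ (i j : Fin n), ∀ y ∈ W,
      (A i y / φ y) * Dd i (fun z => B j z / φ z) y
        - (B i y / φ y) * Dd i (fun z => A j z / φ z) y = 0 := by
    intro i j y hy
    have HP : ∀ p : Fin n → ℝ,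
        ∑ k, (2 * (A k y / φ y) * p k
            * (∑ l, Dd k (fun z => B l z / φ z) y * p l ^ 2)
          - (∑ l, Dd k (fun z => A l z / φ z) y * p l ^ 2)
            * (2 * (B k y / φ y) * p k)) = 0 := by
      intro p
      have h0 := hpois y hy p
      simp only [pbr] at h0
      rw [← h0]
      refine Finset.sum_congr rfl fun k _ => ?_
      rw [pd_quad_p (fun m => A m y / φ y) p k,
        pd_quad_p (fun m => B m y / φ y) p k,
        pd_quad_x hW Sb hy p k, pd_quad_x hW Sa hy p k]
    by_cases hij : i = j
    · subst hij
      set p : Fin n → ℝ := fun k => if k = i then (1:ℝ) else 0 with hp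
      have h := HP p
      rw [Fintype.sum_eq_single i (fun k hk => by simp [hp, if_neg hk])] at h
      have hin : ∀ d : Fin n → ℝ, (∑ l, d l * p l ^ 2) = d i := by
        intro d
        rw [Fintype.sum_eq_single i (fun l hl => by simp [hp, if_neg hl])]
        simp [hp]
      rw [hin, hin] at h
      have hpi : p i = 1 := by simp [hp]
      rw [hpi] at h
      linarith
    · set p : ℝ → (Fin n → ℝ) :=
        fun t k => if k = i then (1:ℝ) else if k = j then t else 0 with hp
      have key : ∀ t : ℝ,
          ((A i y / φ y) * Dd i (fun z => B i z / φ z) y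
            - (B i y / φ y) * Dd i (fun z => A i z / φ z) y)
          + ((A j y / φ y) * Dd j (fun z => B i z / φ z) y
            - (B j y / φ y) * Dd j (fun z => A i z / φ z) y) * t
          + ((A i y / φ y) * Dd i (fun z => B j z / φ z) y
            - (B i y / φ y) * Dd i (fun z => A j z / φ z) y) * t^2
          + ((A j y / φ y) * Dd j (fun z => B j z / φ z) y
            - (B j y / φ y) * Dd j (fun z => A j z / φ z) y) * t^3 = 0 := by
        intro t
        have h := HP (p t)
        rw [Fintype.sum_eq_add i j hij
          (fun k hk => by simp [hp, if_neg hk.1, if_neg hk.2])] at h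
        have hin : ∀ d : Fin n → ℝ, (∑ l, d l * p t l ^ 2) = d i + d j * t^2 := by
          intro d
          rw [Fintype.sum_eq_add i j hij
            (fun l hl => by simp [hp, if_neg hl.1, if_neg hl.2])]
          simp [hp, if_neg (Ne.symm hij)]
        rw [hin, hin, hin, hin] at h
        have hpi : p t i = 1 := by simp [hp]
        have hpj : p t j = t := by simp [hp, if_neg (Ne.symm hij)]
        rw [hpi, hpj] at h
        linear_combination h / 2
      have := cubic_coeff key
      linarith [this]
  -- K2 : second-derivative coefficients
  have K2 : ∀ (i j : Fin n),
      (A i x / φ x) * Dd i (Dd i (fun z => B j z / φ z)) x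
        = (B i x / φ x) * Dd i (Dd i (fun z => A j z / φ z)) x := by
    intro i j
    have dai : DifferentiableAt ℝ (fun z => A i z / φ z) x := (Sa i).diffAt hW hx
    have dbi : DifferentiableAt ℝ (fun z => B i z / φ z) x := (Sb i).diffAt hW hx
    have dDaj : DifferentiableAt ℝ (Dd i (fun z => A j z / φ z)) x :=
      ((Sa j).Dd hW i).diffAt hW hx
    have dDbj : DifferentiableAt ℝ (Dd i (fun z => B j z / φ z)) x :=
      ((Sb j).Dd hW i).diffAt hW hx
    have hzero : Dd i (fun y => (A i y / φ y) * Dd i (fun z => B j z / φ z) y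
        - (B i y / φ y) * Dd i (fun z => A j z / φ z) y) x = 0 := by
      rw [Dd_congrW hW (g := fun _ => (0:ℝ)) (fun y hy => K1 i j y hy) hx i]
      exact Dd_zero i
    have h1 : (A i x / φ x) * Dd i (Dd i (fun z => B j z / φ z)) x
        + Dd i (fun z => B j z / φ z) x * Dd i (fun z => A i z / φ z) x
        - ((B i x / φ x) * Dd i (Dd i (fun z => A j z / φ z)) x
        + Dd i (fun z => A j z / φ z) x * Dd i (fun z => B i z / φ z) x) = 0 := by
      rw [← Dd_mul i dai dDbj, ← Dd_mul i dbi dDaj,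
        ← Dd_sub (u := fun y => A i y / φ y * Dd i (fun z => B j z / φ z) y)
          (v := fun y => B i y / φ y * Dd i (fun z => A j z / φ z) y) i (dai.mul dDbj) (dbi.mul dDaj)]
      exact hzero
    have hDA : Dd i (A i) x = 0 := by
      rw [← pd_eq_Dd i ((hA' i).diffAt hW hx)]; exact hAind i x hx
    have hDB : Dd i (B i) x = 0 := by
      rw [← pd_eq_Dd i ((hB' i).diffAt hW hx)]; exact hBind i x hx
    have h2 : Dd i (fun z => A i z / φ z) x = -(A i x * Dd i φ x) / φ x ^ 2 := by
      rw [Dd_div i ((hA' i).diffAt hW hx) (hφ'.diffAt hW hx) (hφ0 x hx), hDA]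
      ring
    have h3 : Dd i (fun z => B i z / φ z) x = -(B i x * Dd i φ x) / φ x ^ 2 := by
      rw [Dd_div i ((hB' i).diffAt hW hx) (hφ'.diffAt hW hx) (hφ0 x hx), hDB]
      ring
    have h4 : A i x * Dd i (fun z => B j z / φ z) x
        = B i x * Dd i (fun z => A j z / φ z) x := by
      have k1 := K1 i j x hx
      have hφx := hφ0 x hx
      field_simp at k1
      linarith
    linear_combination h1 - Dd i (fun z => B j z / φ z) x * h2
      + Dd i (fun z => A j z / φ z) x * h3 + (Dd i φ x / φ x ^ 2) * h4
  -- symmetry of fourth derivatives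
  have K3 : ∀ (i j : Fin n),
      Dd i (Dd i (Dd j (Dd j f))) x = Dd j (Dd j (Dd i (Dd i f))) x :=
    fun i j => sym4 hW hf' hx i j
  -- reduce P (Q f) and Q (P f) to explicit sums
  have hQfW : ∀ y ∈ W, Q f y = ∑ j, (B j y / φ y) * Dd j (Dd j f) y := by
    intro y hy
    rw [hQ]
    exact Finset.sum_congr rfl fun j _ => by rw [pdpd_eq_DdDd hW hf' hy j]
  have hPfW : ∀ y ∈ W, P f y = ∑ j, (A j y / φ y) * Dd j (Dd j f) y := by
    intro y hy
    rw [hP]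
    exact Finset.sum_congr rfl fun j _ => by rw [pdpd_eq_DdDd hW hf' hy j]
  have SG : Sm W (fun y => ∑ j, (B j y / φ y) * Dd j (Dd j f) y) :=
    ContDiffOn.sum fun j _ => (Sb j).mul (Ss j)
  have SF : Sm W (fun y => ∑ j, (A j y / φ y) * Dd j (Dd j f) y) :=
    ContDiffOn.sum fun j _ => (Sa j).mul (Ss j)
  have step1 : ∀ i, pd i (pd i (Q f)) x
      = Dd i (Dd i (fun y => ∑ j, (B j y / φ y) * Dd j (Dd j f) y)) x :=
    fun i => (pdpd_congrW hW hQfW hx i).trans (pdpd_eq_DdDd hW SG hx i)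
  have step1' : ∀ i, pd i (pd i (P f)) x
      = Dd i (Dd i (fun y => ∑ j, (A j y / φ y) * Dd j (Dd j f) y)) x :=
    fun i => (pdpd_congrW hW hPfW hx i).trans (pdpd_eq_DdDd hW SF hx i)
  have step2 : ∀ i, Dd i (Dd i (fun y => ∑ j, (B j y / φ y) * Dd j (Dd j f) y)) x
      = ∑ j, ((B j x / φ x) * Dd i (Dd i (Dd j (Dd j f))) x
          + 2 * Dd i (fun z => B j z / φ z) x * Dd i (Dd j (Dd j f)) x
          + Dd j (Dd j f) x * Dd i (Dd i (fun z => B j z / φ z)) x) :=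
    fun i => expand2 hW Sb Ss hx i
  have step2' : ∀ i, Dd i (Dd i (fun y => ∑ j, (A j y / φ y) * Dd j (Dd j f) y)) x
      = ∑ j, ((A j x / φ x) * Dd i (Dd i (Dd j (Dd j f))) x
          + 2 * Dd i (fun z => A j z / φ z) x * Dd i (Dd j (Dd j f)) x
          + Dd j (Dd j f) x * Dd i (Dd i (fun z => A j z / φ z)) x) :=
    fun i => expand2 hW Sa Ss hx i
  rw [hP (Q f) x, hQ (P f) x]
  calc ∑ i, (A i x / φ x) * pd i (pd i (Q f)) x
      = ∑ i, ∑ j, (A i x / φ x) * ((B j x / φ x) * Dd i (Dd i (Dd j (Dd j f))) x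
          + 2 * Dd i (fun z => B j z / φ z) x * Dd i (Dd j (Dd j f)) x
          + Dd j (Dd j f) x * Dd i (Dd i (fun z => B j z / φ z)) x) := by
        refine Finset.sum_congr rfl fun i _ => ?_
        rw [step1 i, step2 i, Finset.mul_sum]
    _ = ∑ i, ∑ j, ((A i x / φ x) * (B j x / φ x) * Dd i (Dd i (Dd j (Dd j f))) x
          + 2 * ((A i x / φ x) * Dd i (fun z => B j z / φ z) x) * Dd i (Dd j (Dd j f)) x
          + ((A i x / φ x) * Dd i (Dd i (fun z => B j z / φ z)) x) * Dd j (Dd j f) x) := by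
        refine Finset.sum_congr rfl fun i _ => Finset.sum_congr rfl fun j _ => by ring
    _ = ∑ i, ∑ j, ((B i x / φ x) * (A j x / φ x) * Dd i (Dd i (Dd j (Dd j f))) x
          + 2 * ((B i x / φ x) * Dd i (fun z => A j z / φ z) x) * Dd i (Dd j (Dd j f)) x
          + ((B i x / φ x) * Dd i (Dd i (fun z => A j z / φ z)) x) * Dd j (Dd j f) x) := by
        simp only [Finset.sum_add_distrib]
        congr 1
        · congr 1
          · -- leading terms: antisymmetry + symmetry of 4th derivatives
            rw [Finset.sum_comm]
            refine Finset.sum_congr rfl fun i _ => Finset.sum_congr rfl fun j _ => ?_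
            rw [K3 j i]; ring
          · -- middle terms: K1
            refine Finset.sum_congr rfl fun i _ => Finset.sum_congr rfl fun j _ => ?_
            have h := K1 i j x hx
            have : (A i x / φ x) * Dd i (fun z => B j z / φ z) x
                = (B i x / φ x) * Dd i (fun z => A j z / φ z) x := by linarith
            rw [this]
        · -- last terms: K2
          refine Finset.sum_congr rfl fun i _ => Finset.sum_congr rfl fun j _ => ?_
          rw [K2 i j]
    _ = ∑ i, (B i x / φ x) * pd i (pd i (P f)) x := by
        refine Finset.sum_congr rfl fun i _ => ?_
        rw [step1' i, step2' i, Finset.mul_sum]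
        refine Finset.sum_congr rfl fun j _ => by ring
end

section
/- Let Ĥ_α = Σ_i H_{(α)}^{ii} ∂_i² be commuting operators and U_α, U_β smooth functions (acting by multiplication). If [Ĥ_α + U_α, Ĥ_β + U_β] = 0 as operators on C^∞(W), then for every s one has H_{(α)}^{ss} ∂U_β/∂x^s − H_{(β)}^{ss} ∂U_α/∂x^s = 0, and consequently the classical Hamiltonians H_α + U_α and H_β + U_β Poisson commute. -/
open Function Matrix

lemma pd_update {n : ℕ} (i : Fin n) (f : (Fin n → ℝ) → ℝ) (x : Fin n → ℝ) (t : ℝ) :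
    pd i f (Function.update x i t) = deriv (fun u : ℝ => f (Function.update x i u)) t := by
  unfold pd
  simp [Function.update_idem]

lemma pd_pd_eq {n : ℕ} (i : Fin n) (f : (Fin n → ℝ) → ℝ) (x : Fin n → ℝ) :
    pd i (pd i f) x = deriv (deriv (fun t : ℝ => f (Function.update x i t))) (x i) := by
  conv_lhs => rw [pd]
  congr 1
  funext t
  exact pd_update i f x t

lemma contDiff_update_slice {n : ℕ} (i : Fin n) (x : Fin n → ℝ) :
    ContDiff ℝ (⊤ : ℕ∞) (fun t : ℝ => Function.update x i t) := by
  apply contDiff_pi.mpr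
  intro k
  simp only [Function.update_apply]
  by_cases h : k = i
  · simp only [if_pos h]; exact contDiff_id
  · simp only [if_neg h]; exact contDiff_const

lemma slice_contDiffOn {n : ℕ} {W : Set (Fin n → ℝ)} {u : (Fin n → ℝ) → ℝ}
    (hu : ContDiffOn ℝ (⊤ : ℕ∞) u W) (i : Fin n) (x : Fin n → ℝ) :
    ContDiffOn ℝ (⊤ : ℕ∞) (fun t : ℝ => u (Function.update x i t)) ((fun t : ℝ => Function.update x i t) ⁻¹' W) :=
  hu.comp (contDiff_update_slice i x).contDiffOn (Set.mapsTo_preimage _ _)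

section oneD
variable {F G q : ℝ → ℝ} {V : Set ℝ} {t : ℝ}

lemma diffAt_of_cd (hV : IsOpen V) (ht : t ∈ V) (hF : ContDiffOn ℝ (⊤ : ℕ∞) F V) :
    DifferentiableAt ℝ F t :=
  ((hF.differentiableOn (by simp)).differentiableAt (hV.mem_nhds ht))

lemma cd_deriv (hV : IsOpen V) (hF : ContDiffOn ℝ (⊤ : ℕ∞) F V) :
    ContDiffOn ℝ (⊤ : ℕ∞) (deriv F) V := by
  have := hF.deriv_of_isOpen hV (m := (⊤ : ℕ∞)) (by simp)
  exact this

lemma diffAt_deriv (hV : IsOpen V) (ht : t ∈ V) (hF : ContDiffOn ℝ (⊤ : ℕ∞) F V) :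
    DifferentiableAt ℝ (deriv F) t :=
  diffAt_of_cd hV ht (cd_deriv hV hF)

lemma deriv2_add (hV : IsOpen V) (ht : t ∈ V)
    (hF : ContDiffOn ℝ (⊤ : ℕ∞) F V) (hG : ContDiffOn ℝ (⊤ : ℕ∞) G V) :
    deriv (deriv (fun u => F u + G u)) t = deriv (deriv F) t + deriv (deriv G) t := by
  have h1 : (deriv fun u => F u + G u) =ᶠ[nhds t] fun u => deriv F u + deriv G u := by
    filter_upwards [hV.mem_nhds ht] with u hu
    exact deriv_add (diffAt_of_cd hV hu hF) (diffAt_of_cd hV hu hG)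
  rw [h1.deriv_eq]
  exact deriv_add (diffAt_deriv hV ht hF) (diffAt_deriv hV ht hG)

lemma deriv2_mul (hV : IsOpen V) (ht : t ∈ V)
    (hF : ContDiffOn ℝ (⊤ : ℕ∞) F V) (hq : ContDiff ℝ (⊤ : ℕ∞) q) :
    deriv (deriv (fun u => F u * q u)) t
      = deriv (deriv F) t * q t + 2 * (deriv F t * deriv q t) + F t * deriv (deriv q) t := by
  have hq' : ContDiff ℝ (⊤ : ℕ∞) (deriv q) := by
    have := (hq.contDiffOn (s := Set.univ)).deriv_of_isOpen isOpen_univ (m := (⊤ : ℕ∞)) (by simp)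
    rw [← contDiffOn_univ]
    exact this
  have h1 : (deriv fun u => F u * q u) =ᶠ[nhds t] fun u => deriv F u * q u + F u * deriv q u := by
    filter_upwards [hV.mem_nhds ht] with u hu
    exact deriv_fun_mul (diffAt_of_cd hV hu hF) (hq.differentiable (by simp)).differentiableAt
  rw [h1.deriv_eq,
    deriv_fun_add (f := fun u => deriv F u * q u) (g := fun u => F u * deriv q u)
      ((diffAt_deriv hV ht hF).mul (hq.differentiable (by simp)).differentiableAt)
      ((diffAt_of_cd hV ht hF).mul (hq'.differentiable (by simp)).differentiableAt),
    deriv_fun_mul (diffAt_deriv hV ht hF) (hq.differentiable (by simp)).differentiableAt,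
    deriv_fun_mul (diffAt_of_cd hV ht hF) (hq'.differentiable (by simp)).differentiableAt]
  ring

end oneD

section pdlem
variable {n : ℕ} {W : Set (Fin n → ℝ)} {u v : (Fin n → ℝ) → ℝ} {x : Fin n → ℝ} {i : Fin n}

lemma mem_slice_preimage (hx : x ∈ W) (i : Fin n) :
    x i ∈ (fun t : ℝ => Function.update x i t) ⁻¹' W := by
  simp [Function.update_eq_self, hx]

lemma pd2_add (hW : IsOpen W) (hx : x ∈ W)
    (hu : ContDiffOn ℝ (⊤ : ℕ∞) u W) (hv : ContDiffOn ℝ (⊤ : ℕ∞) v W) :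
    pd i (pd i (fun y => u y + v y)) x = pd i (pd i u) x + pd i (pd i v) x := by
  rw [pd_pd_eq, pd_pd_eq, pd_pd_eq]
  exact deriv2_add (hW.preimage (contDiff_update_slice i x).continuous) (mem_slice_preimage hx i)
    (slice_contDiffOn hu i x) (slice_contDiffOn hv i x)

lemma pd2_mul (hW : IsOpen W) (hx : x ∈ W)
    (hu : ContDiffOn ℝ (⊤ : ℕ∞) u W) {m : (Fin n → ℝ) → ℝ} (hm : ContDiff ℝ (⊤ : ℕ∞) m) :
    pd i (pd i (fun y => u y * m y)) x
      = pd i (pd i u) x * m x + 2 * (pd i u x * pd i m x) + u x * pd i (pd i m) x := by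
  rw [pd_pd_eq, pd_pd_eq, pd_pd_eq]
  have := deriv2_mul (q := fun t => m (Function.update x i t))
    (hW.preimage (contDiff_update_slice i x).continuous) (mem_slice_preimage hx i)
    (slice_contDiffOn hu i x) (hm.comp (contDiff_update_slice i x))
  rw [this, Function.update_eq_self]
  simp only [pd, Function.update_eq_self]

end pdlem

section mono
variable {n : ℕ} (i r s : Fin n) (x : Fin n → ℝ)

lemma deriv_two_mul : deriv (fun t : ℝ => 2 * t) = fun _ => 2 := by
  funext t; rw [deriv_const_mul_field]; simp

lemma pd_const (c : ℝ) : pd i (fun _ => c) x = 0 := by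
  unfold pd; simp

lemma pd2_const (c : ℝ) : pd i (pd i (fun _ => c)) x = 0 := by
  rw [pd_pd_eq]; simp

lemma pd_const_mul (c : ℝ) (u : (Fin n → ℝ) → ℝ) :
    pd i (fun y => c * u y) x = c * pd i u x := by
  unfold pd; exact deriv_const_mul_field c

lemma pd2_const_mul (c : ℝ) (u : (Fin n → ℝ) → ℝ) :
    pd i (pd i (fun y => c * u y)) x = c * pd i (pd i u) x := by
  rw [pd_pd_eq, pd_pd_eq, deriv_const_mul_field', deriv_const_mul_field']

lemma pd_coord : pd i (fun y => y s) x = if s = i then 1 else 0 := by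
  unfold pd
  simp only [Function.update_apply]
  by_cases h : s = i <;> simp [h]

lemma pd2_coord : pd i (pd i (fun y => y s)) x = 0 := by
  rw [pd_pd_eq]
  simp only [Function.update_apply]
  by_cases h : s = i <;> simp [h]

lemma pd_sq : pd i (fun y => (y s)^2) x = if s = i then 2 * x s else 0 := by
  unfold pd
  simp only [Function.update_apply]
  by_cases h : s = i <;> simp [h]

lemma pd2_sq : pd i (pd i (fun y => (y s)^2)) x = if s = i then 2 else 0 := by
  rw [pd_pd_eq]
  simp only [Function.update_apply]
  by_cases h : s = i <;> simp [h, deriv_const_mul_field']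
  rw [show deriv (fun t : ℝ => t ^ 2) = fun t => 2 * t from by funext t; simp, deriv_two_mul]

lemma pd_cub : pd i (fun y => y r * (y s)^2) x
    = (if r = i then (x s)^2 else 0) + (if s = i then 2 * x r * x s else 0) := by
  unfold pd
  simp only [Function.update_apply]
  by_cases h : s = i <;> by_cases h' : r = i
  · subst h h'
    have : (fun t : ℝ => t * t ^ 2) = fun t : ℝ => t ^ 3 := by funext t; ring
    simp [this]; ring
  · subst h; simp [h']; ring
  · subst h'; simp [h]
  · simp [h, h']

lemma pd2_cub : pd i (pd i (fun y => y r * (y s)^2)) x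
    = if s = i then (if r = s then 6 * x s else 2 * x r) else 0 := by
  rw [pd_pd_eq]
  simp only [Function.update_apply]
  by_cases h : s = i <;> by_cases h' : r = i
  · subst h
    rw [if_pos h']
    subst h'
    have : (fun t : ℝ => t * t ^ 2) = fun t : ℝ => t ^ 3 := by funext t; ring
    simp [this]
    rw [show deriv (fun t : ℝ => t ^ 3) = fun t => 3 * t ^ 2 from by funext t; simp]
    simp
    ring
  · subst h
    rw [if_neg h']
    simp [h', deriv_const_mul_field']
    rw [show (HMul.hMul (2:ℝ) : ℝ → ℝ) = fun t : ℝ => 2 * t from rfl]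
    simp [mul_comm]
  · subst h'; simp [h]
  · simp [h, h']

end mono

section smooth
variable {n : ℕ} {W : Set (Fin n → ℝ)}

lemma contDiffOn_finprod {ι : Type*} [DecidableEq ι] (s : Finset ι)
    (f : ι → (Fin n → ℝ) → ℝ) (h : ∀ i ∈ s, ContDiffOn ℝ (⊤ : ℕ∞) (f i) W) :
    ContDiffOn ℝ (⊤ : ℕ∞) (fun x => ∏ i ∈ s, f i x) W := by
  induction s using Finset.induction_on with
  | empty => simpa using contDiffOn_const
  | @insert a t hnot ih =>
    simp only [Finset.prod_insert hnot]
    exact (h a (Finset.mem_insert_self a t)).mul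
      (ih fun i hi => h i (Finset.mem_insert_of_mem hi))

lemma contDiffOn_det {M : (Fin n → ℝ) → Matrix (Fin n) (Fin n) ℝ}
    (h : ∀ i j, ContDiffOn ℝ (⊤ : ℕ∞) (fun x => M x i j) W) :
    ContDiffOn ℝ (⊤ : ℕ∞) (fun x => (M x).det) W := by
  have e : (fun x => (M x).det)
      = fun x => ∑ σ : Equiv.Perm (Fin n), ((Equiv.Perm.sign σ : ℤ) : ℝ) * ∏ i, M x (σ i) i := by
    funext x
    rw [Matrix.det_apply']
  rw [e]
  exact ContDiffOn.sum fun σ _ =>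
    contDiffOn_const.mul (contDiffOn_finprod _ _ fun i _ => h (σ i) i)

lemma contDiffOn_adj {S : (Fin n → ℝ) → Matrix (Fin n) (Fin n) ℝ}
    (hS : ∀ i j, ContDiffOn ℝ (⊤ : ℕ∞) (fun x => S x i j) W) (i μ : Fin n) :
    ContDiffOn ℝ (⊤ : ℕ∞) (fun x => (S x).adjugate i μ) W := by
  have e : (fun x => (S x).adjugate i μ)
      = fun x => ((S x).updateRow μ (Pi.single i 1)).det := by
    funext x; rw [Matrix.adjugate_apply]
  rw [e]
  apply contDiffOn_det
  intro k l
  simp only [Matrix.updateRow_apply]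
  by_cases hk : k = μ
  · simp only [if_pos hk]; exact contDiffOn_const
  · simp only [if_neg hk]; exact hS k l

lemma contDiffOn_A {S : (Fin n → ℝ) → Matrix (Fin n) (Fin n) ℝ}
    (hS : ∀ i j, ContDiffOn ℝ (⊤ : ℕ∞) (fun x => S x i j) W)
    (hdet : ∀ x ∈ W, (S x).det ≠ 0) (i μ : Fin n) :
    ContDiffOn ℝ (⊤ : ℕ∞) (fun x => (S x).adjugate i μ / (S x).det) W :=
  (contDiffOn_adj hS i μ).div (contDiffOn_det hS) hdet

end smooth

section pd1
variable {n : ℕ} {W : Set (Fin n → ℝ)} {u v : (Fin n → ℝ) → ℝ} {x : Fin n → ℝ} {i : Fin n}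

lemma contDiff_coord (s : Fin n) : ContDiff ℝ (⊤ : ℕ∞) (fun y : Fin n → ℝ => y s) :=
  (ContinuousLinearMap.proj (R := ℝ) (φ := fun _ : Fin n => ℝ) s).contDiff

lemma pd_diffAt (hW : IsOpen W) (hx : x ∈ W) (hu : ContDiffOn ℝ (⊤ : ℕ∞) u W) :
    DifferentiableAt ℝ (fun t : ℝ => u (Function.update x i t)) (x i) :=
  diffAt_of_cd (hW.preimage (contDiff_update_slice i x).continuous)
    (mem_slice_preimage hx i) (slice_contDiffOn hu i x)

lemma pd_add (hW : IsOpen W) (hx : x ∈ W)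
    (hu : ContDiffOn ℝ (⊤ : ℕ∞) u W) (hv : ContDiffOn ℝ (⊤ : ℕ∞) v W) :
    pd i (fun y => u y + v y) x = pd i u x + pd i v x := by
  unfold pd
  exact deriv_add (pd_diffAt hW hx hu) (pd_diffAt hW hx hv)

lemma pd_sum {m : ℕ} (hW : IsOpen W) (hx : x ∈ W) (g : Fin m → (Fin n → ℝ) → ℝ)
    (hg : ∀ k, ContDiffOn ℝ (⊤ : ℕ∞) (g k) W) :
    pd i (fun y => ∑ k, g k y) x = ∑ k, pd i (g k) x := by
  unfold pd
  rw [show (fun t : ℝ => ∑ k, g k (Function.update x i t))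
      = fun t : ℝ => ∑ k, (fun t' => g k (Function.update x i t')) t from rfl]
  rw [deriv_fun_sum fun k _ => pd_diffAt hW hx (hg k)]

lemma pd_mul_const (c : ℝ) (u : (Fin n → ℝ) → ℝ) :
    pd i (fun y => u y * c) x = pd i u x * c := by
  unfold pd; exact deriv_mul_const_field c

lemma pd_qform (c : Fin n → ℝ) (d : ℝ) (p : Fin n → ℝ) :
    pd i (fun q => (∑ k, c k * q k ^ 2) + d) p = 2 * c i * p i := by
  unfold pd
  rw [show (fun t : ℝ => (∑ k, c k * Function.update p i t k ^ 2) + d)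
      = fun t : ℝ => (∑ k, (fun t' : ℝ => c k * Function.update p i t' k ^ 2) t) + d from rfl]
  rw [deriv_add_const, deriv_fun_sum ?_]
  · have e : ∀ k, deriv (fun t' : ℝ => c k * Function.update p i t' k ^ 2) (p i)
        = if i = k then 2 * c i * p i else 0 := by
      intro k
      simp only [Function.update_apply]
      by_cases h : k = i
      · subst h
        simp [deriv_const_mul_field']
        ring
      · simp only [if_neg (fun hc : i = k => h hc.symm), if_neg h]
        exact deriv_const _ _
    simp only [e, Finset.sum_ite_eq, Finset.mem_univ, if_true]
  · intro k _
    simp only [Function.update_apply]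
    by_cases h : k = i
    · simp only [if_pos h]
      exact (differentiable_const _).differentiableAt.mul ((differentiable_id.pow 2).differentiableAt)
    · simp only [if_neg h]
      exact differentiableAt_const _

end pd1

lemma key {n : ℕ} {W : Set (Fin n → ℝ)} (hW : IsOpen W)
    (Aa Ab : Fin n → (Fin n → ℝ) → ℝ)
    (hAa : ∀ i, ContDiffOn ℝ (⊤ : ℕ∞) (Aa i) W) (hAb : ∀ i, ContDiffOn ℝ (⊤ : ℕ∞) (Ab i) W)
    (Uα Uβ : (Fin n → ℝ) → ℝ)
    (hUα : ContDiffOn ℝ (⊤ : ℕ∞) Uα W) (hUβ : ContDiffOn ℝ (⊤ : ℕ∞) Uβ W)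
    (hcomm : ∀ f : (Fin n → ℝ) → ℝ, ContDiffOn ℝ (⊤ : ℕ∞) f W → ∀ x ∈ W,
      (∑ i, Aa i x * pd i (pd i (fun y => (∑ j, Ab j y * pd j (pd j f) y) + Uβ y * f y)) x)
        + Uα x * ((∑ j, Ab j x * pd j (pd j f) x) + Uβ x * f x)
      = (∑ i, Ab i x * pd i (pd i (fun y => (∑ j, Aa j y * pd j (pd j f) y) + Uα y * f y)) x)
        + Uβ x * ((∑ j, Aa j x * pd j (pd j f) x) + Uα x * f x)) :
    ∀ x ∈ W, (∀ s, Aa s x * pd s Uβ x - Ab s x * pd s Uα x = 0)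
      ∧ (∀ r s, Aa r x * pd r (Ab s) x - Ab r x * pd r (Aa s) x = 0) := by
  intro x hx
  have h1 := hcomm (fun _ => (1:ℝ)) contDiffOn_const x hx
  simp only [pd2_const, mul_zero, Finset.sum_const_zero, zero_add, mul_one] at h1
  have E0 : (∑ i, Aa i x * pd i (pd i Uβ) x) - (∑ i, Ab i x * pd i (pd i Uα) x) = 0 := by
    linear_combination h1
  have hT1 : ∀ s, Aa s x * pd s Uβ x - Ab s x * pd s Uα x = 0 := by
    intro s
    have h2 := hcomm (fun y => y s) (contDiff_coord s).contDiffOn x hx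
    simp only [pd2_coord, mul_zero, Finset.sum_const_zero, zero_add] at h2
    have e : ∀ (U : (Fin n → ℝ) → ℝ), ContDiffOn ℝ (⊤ : ℕ∞) U W → ∀ i : Fin n,
        pd i (pd i (fun y => U y * y s)) x
          = pd i (pd i U) x * x s + (if s = i then 2 * pd s U x else 0) := by
      intro U hU i
      simp only [pd2_mul hW hx hU (contDiff_coord s), pd_coord, pd2_coord, mul_zero, add_zero]
      split_ifs with h
      · subst h; ring
      · ring
    have hsplit : ∀ (A : Fin n → ℝ) (U : (Fin n → ℝ) → ℝ), ContDiffOn ℝ (⊤ : ℕ∞) U W →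
        (∑ i, A i * pd i (pd i (fun y => U y * y s)) x)
          = (∑ i, A i * pd i (pd i U) x) * x s + A s * (2 * pd s U x) := by
      intro A U hU
      have e2 : (∑ i, A i * pd i (pd i (fun y => U y * y s)) x)
          = ∑ i, (A i * pd i (pd i U) x * x s + (if s = i then A i * (2 * pd s U x) else 0)) := by
        apply Finset.sum_congr rfl
        intro i _
        rw [e U hU i]
        split_ifs with h <;> ring
      rw [e2, Finset.sum_add_distrib, ← Finset.sum_mul, Finset.sum_ite_eq,
        if_pos (Finset.mem_univ s)]
    simp only [hsplit (fun i => Aa i x) Uβ hUβ, hsplit (fun i => Ab i x) Uα hUα] at h2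
    linear_combination h2 / 2 - x s / 2 * E0
  have hC : ∀ s, (∑ i, Aa i x * pd i (pd i (Ab s)) x)
      - (∑ i, Ab i x * pd i (pd i (Aa s)) x) = 0 := by
    intro s
    have h3 := hcomm (fun y => (y s)^2) ((contDiff_coord s).pow 2).contDiffOn x hx
    simp only [pd2_sq, mul_ite, mul_one, mul_zero, Finset.sum_ite_eq, Finset.mem_univ,
      if_true] at h3
    have e : ∀ (A' U : (Fin n → ℝ) → ℝ), ContDiffOn ℝ (⊤ : ℕ∞) A' W → ContDiffOn ℝ (⊤ : ℕ∞) U W →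
        ∀ i : Fin n,
        pd i (pd i (fun y => A' y * 2 + U y * (y s)^2)) x
          = (pd i (pd i A') x * 2 + pd i (pd i U) x * (x s)^2)
            + (if s = i then 4 * x s * pd s U x + 2 * U x else 0) := by
      intro A' U hA' hU i
      simp only [pd2_add hW hx (hA'.mul contDiffOn_const)
          (hU.mul (((contDiff_coord s).pow 2).contDiffOn)),
        pd2_mul hW hx hA' (contDiff_const (c := (2:ℝ))),
        pd2_mul hW hx hU ((contDiff_coord s).pow 2),
        pd_const, pd2_const, pd_sq, pd2_sq, mul_zero, add_zero]
      split_ifs with h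
      · subst h; ring
      · ring
    have hsplit : ∀ (A : Fin n → ℝ) (A' U : (Fin n → ℝ) → ℝ),
        ContDiffOn ℝ (⊤ : ℕ∞) A' W → ContDiffOn ℝ (⊤ : ℕ∞) U W →
        (∑ i, A i * pd i (pd i (fun y => A' y * 2 + U y * (y s)^2)) x)
          = (∑ i, A i * pd i (pd i A') x) * 2 + (∑ i, A i * pd i (pd i U) x) * (x s)^2
            + A s * (4 * x s * pd s U x + 2 * U x) := by
      intro A A' U hA' hU
      have e2 : (∑ i, A i * pd i (pd i (fun y => A' y * 2 + U y * (y s)^2)) x)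
          = ∑ i, (A i * pd i (pd i A') x * 2 + A i * pd i (pd i U) x * (x s)^2
              + (if s = i then A i * (4 * x s * pd s U x + 2 * U x) else 0)) := by
        apply Finset.sum_congr rfl
        intro i _
        rw [e A' U hA' hU i]
        split_ifs with h <;> ring
      rw [e2]
      simp only [Finset.sum_add_distrib]
      rw [← Finset.sum_mul, ← Finset.sum_mul, Finset.sum_ite_eq, if_pos (Finset.mem_univ s)]
    simp only [hsplit (fun i => Aa i x) (Ab s) Uβ (hAb s) hUβ,
      hsplit (fun i => Ab i x) (Aa s) Uα (hAa s) hUα] at h3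
    linear_combination h3 / 2 - (x s)^2 / 2 * E0 - 2 * x s * hT1 s
  refine ⟨hT1, ?_⟩
  intro r s
  by_cases hrs : r = s
  · subst hrs
    have hm1 : ContDiff ℝ (⊤ : ℕ∞) (fun y : Fin n → ℝ => 6 * y r) :=
      contDiff_const.mul (contDiff_coord r)
    have hm2 : ContDiff ℝ (⊤ : ℕ∞) (fun y : Fin n → ℝ => y r * (y r)^2) :=
      (contDiff_coord r).mul ((contDiff_coord r).pow 2)
    have h5 := hcomm (fun y => y r * (y r)^2) hm2.contDiffOn x hx
    simp only [pd2_cub, eq_self_iff_true, if_true, mul_ite, mul_zero, Finset.sum_ite_eq,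
      Finset.mem_univ] at h5
    have e : ∀ (A' U : (Fin n → ℝ) → ℝ), ContDiffOn ℝ (⊤ : ℕ∞) A' W → ContDiffOn ℝ (⊤ : ℕ∞) U W →
        ∀ i : Fin n,
        pd i (pd i (fun y => A' y * (6 * y r) + U y * (y r * (y r)^2))) x
          = (pd i (pd i A') x * (6 * x r) + pd i (pd i U) x * (x r * (x r)^2))
            + (if r = i then 12 * pd r A' x + 6 * (x r)^2 * pd r U x + 6 * x r * U x
              else 0) := by
      intro A' U hA' hU i
      simp only [pd2_add hW hx (hA'.mul hm1.contDiffOn) (hU.mul hm2.contDiffOn),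
        pd2_mul hW hx hA' hm1, pd2_mul hW hx hU hm2,
        pd_const_mul, pd2_const_mul, pd_coord, pd2_coord, pd_cub, pd2_cub,
        eq_self_iff_true, if_true, mul_zero, add_zero]
      split_ifs with h
      · subst h; ring
      · ring
    have hsplit : ∀ (A : Fin n → ℝ) (A' U : (Fin n → ℝ) → ℝ),
        ContDiffOn ℝ (⊤ : ℕ∞) A' W → ContDiffOn ℝ (⊤ : ℕ∞) U W →
        (∑ i, A i * pd i (pd i (fun y => A' y * (6 * y r) + U y * (y r * (y r)^2))) x)
          = (∑ i, A i * pd i (pd i A') x) * (6 * x r)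
            + (∑ i, A i * pd i (pd i U) x) * (x r * (x r)^2)
            + A r * (12 * pd r A' x + 6 * (x r)^2 * pd r U x + 6 * x r * U x) := by
      intro A A' U hA' hU
      have e2 : (∑ i, A i * pd i (pd i (fun y => A' y * (6 * y r) + U y * (y r * (y r)^2))) x)
          = ∑ i, (A i * pd i (pd i A') x * (6 * x r)
              + A i * pd i (pd i U) x * (x r * (x r)^2)
              + (if r = i then
                  A i * (12 * pd r A' x + 6 * (x r)^2 * pd r U x + 6 * x r * U x) else 0)) := by
        apply Finset.sum_congr rfl
        intro i _
        rw [e A' U hA' hU i]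
        split_ifs with h <;> ring
      rw [e2]
      simp only [Finset.sum_add_distrib]
      rw [← Finset.sum_mul, ← Finset.sum_mul, Finset.sum_ite_eq, if_pos (Finset.mem_univ r)]
    simp only [hsplit (fun i => Aa i x) (Ab r) Uβ (hAb r) hUβ,
      hsplit (fun i => Ab i x) (Aa r) Uα (hAa r) hUα] at h5
    linear_combination h5 / 12 - x r / 2 * hC r - (x r)^3 / 12 * E0 - (x r)^2 / 2 * hT1 r
  · have hm1 : ContDiff ℝ (⊤ : ℕ∞) (fun y : Fin n → ℝ => 2 * y r) :=
      contDiff_const.mul (contDiff_coord r)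
    have hm2 : ContDiff ℝ (⊤ : ℕ∞) (fun y : Fin n → ℝ => y r * (y s)^2) :=
      (contDiff_coord r).mul ((contDiff_coord s).pow 2)
    have h4 := hcomm (fun y => y r * (y s)^2) hm2.contDiffOn x hx
    simp only [pd2_cub, if_neg hrs, mul_ite, mul_zero, Finset.sum_ite_eq,
      Finset.mem_univ, if_true] at h4
    have e : ∀ (A' U : (Fin n → ℝ) → ℝ), ContDiffOn ℝ (⊤ : ℕ∞) A' W → ContDiffOn ℝ (⊤ : ℕ∞) U W →
        ∀ i : Fin n,
        pd i (pd i (fun y => A' y * (2 * y r) + U y * (y r * (y s)^2))) x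
          = (pd i (pd i A') x * (2 * x r) + pd i (pd i U) x * (x r * (x s)^2))
            + ((if r = i then 4 * pd r A' x + 2 * (x s)^2 * pd r U x else 0)
              + (if s = i then 4 * x r * x s * pd s U x + 2 * x r * U x else 0)) := by
      intro A' U hA' hU i
      simp only [pd2_add hW hx (hA'.mul hm1.contDiffOn) (hU.mul hm2.contDiffOn),
        pd2_mul hW hx hA' hm1, pd2_mul hW hx hU hm2,
        pd_const_mul, pd2_const_mul, pd_coord, pd2_coord, pd_cub, pd2_cub,
        if_neg hrs, mul_zero, add_zero]
      split_ifs with h1 h2 h3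
      · exact absurd (h1.trans h2.symm) hrs
      · subst h1; ring
      · subst h3; ring
      · ring
    have hsplit : ∀ (A : Fin n → ℝ) (A' U : (Fin n → ℝ) → ℝ),
        ContDiffOn ℝ (⊤ : ℕ∞) A' W → ContDiffOn ℝ (⊤ : ℕ∞) U W →
        (∑ i, A i * pd i (pd i (fun y => A' y * (2 * y r) + U y * (y r * (y s)^2))) x)
          = (∑ i, A i * pd i (pd i A') x) * (2 * x r)
            + (∑ i, A i * pd i (pd i U) x) * (x r * (x s)^2)
            + A r * (4 * pd r A' x + 2 * (x s)^2 * pd r U x)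
            + A s * (4 * x r * x s * pd s U x + 2 * x r * U x) := by
      intro A A' U hA' hU
      have e2 : (∑ i, A i * pd i (pd i (fun y => A' y * (2 * y r) + U y * (y r * (y s)^2))) x)
          = ∑ i, (A i * pd i (pd i A') x * (2 * x r)
              + A i * pd i (pd i U) x * (x r * (x s)^2)
              + ((if r = i then A i * (4 * pd r A' x + 2 * (x s)^2 * pd r U x) else 0)
                + (if s = i then A i * (4 * x r * x s * pd s U x + 2 * x r * U x) else 0))) := by
        apply Finset.sum_congr rfl
        intro i _
        rw [e A' U hA' hU i]
        split_ifs with h1 h2 h3 <;> ring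
      rw [e2]
      simp only [Finset.sum_add_distrib]
      rw [← Finset.sum_mul, ← Finset.sum_mul, Finset.sum_ite_eq, Finset.sum_ite_eq,
        if_pos (Finset.mem_univ r), if_pos (Finset.mem_univ s)]
      ring
    simp only [hsplit (fun i => Aa i x) (Ab s) Uβ (hAb s) hUβ,
      hsplit (fun i => Ab i x) (Aa s) Uα (hAa s) hUα] at h4
    linear_combination h4 / 4 - x r / 2 * hC s - x r * (x s)^2 / 4 * E0
      - (x s)^2 / 2 * hT1 r - x r * x s * hT1 s

lemma pbr_zero {n : ℕ} {W : Set (Fin n → ℝ)} (hW : IsOpen W)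
    (Aa Ab : Fin n → (Fin n → ℝ) → ℝ)
    (hAa : ∀ i, ContDiffOn ℝ (⊤ : ℕ∞) (Aa i) W) (hAb : ∀ i, ContDiffOn ℝ (⊤ : ℕ∞) (Ab i) W)
    (Uα Uβ : (Fin n → ℝ) → ℝ)
    (hUα : ContDiffOn ℝ (⊤ : ℕ∞) Uα W) (hUβ : ContDiffOn ℝ (⊤ : ℕ∞) Uβ W)
    (x : Fin n → ℝ) (hx : x ∈ W)
    (hT1 : ∀ s, Aa s x * pd s Uβ x - Ab s x * pd s Uα x = 0)
    (hT2 : ∀ r s, Aa r x * pd r (Ab s) x - Ab r x * pd r (Aa s) x = 0)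
    (p : Fin n → ℝ) :
    pbr (fun y q => (∑ i, Aa i y * q i ^ 2) + Uα y)
      (fun y q => (∑ i, Ab i y * q i ^ 2) + Uβ y) x p = 0 := by
  unfold pbr
  simp only [pd_qform]
  simp only [pd_add hW hx (ContDiffOn.sum fun k _ => (hAa k).mul contDiffOn_const) hUα,
    pd_add hW hx (ContDiffOn.sum fun k _ => (hAb k).mul contDiffOn_const) hUβ,
    pd_sum hW hx (fun k y => Aa k y * p k ^ 2) (fun k => (hAa k).mul contDiffOn_const),
    pd_sum hW hx (fun k y => Ab k y * p k ^ 2) (fun k => (hAb k).mul contDiffOn_const),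
    pd_mul_const]
  apply Finset.sum_eq_zero
  intro i _
  have hb : Aa i x * (∑ k, pd i (Ab k) x * p k ^ 2)
      - Ab i x * (∑ k, pd i (Aa k) x * p k ^ 2) = 0 := by
    rw [Finset.mul_sum, Finset.mul_sum, ← Finset.sum_sub_distrib]
    apply Finset.sum_eq_zero
    intro k _
    linear_combination p k ^ 2 * hT2 i k
  linear_combination 2 * p i * hb + 2 * p i * hT1 i

theorem stmt10 {n : ℕ} (W : Set (Fin n → ℝ)) (hW : IsOpen W)
    (S : (Fin n → ℝ) → Matrix (Fin n) (Fin n) ℝ)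
    (hS : ∀ i j, ContDiffOn ℝ (⊤ : ℕ∞) (fun x => S x i j) W)
    (hrow : ∀ i j, ∀ x ∈ W, ∀ y ∈ W, x i = y i → S x i j = S y i j)
    (hdet : ∀ x ∈ W, (S x).det ≠ 0)
    (α β : Fin n)
    (Uα Uβ : (Fin n → ℝ) → ℝ)
    (hUα : ContDiffOn ℝ (⊤ : ℕ∞) Uα W) (hUβ : ContDiffOn ℝ (⊤ : ℕ∞) Uβ W)
    (hcomm : ∀ f : (Fin n → ℝ) → ℝ, ContDiffOn ℝ (⊤ : ℕ∞) f W → ∀ x ∈ W,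
      (∑ i, ((S x).adjugate i α / (S x).det) *
          pd i (pd i (fun y => (∑ j, ((S y).adjugate j β / (S y).det) * pd j (pd j f) y)
            + Uβ y * f y)) x)
        + Uα x * ((∑ j, ((S x).adjugate j β / (S x).det) * pd j (pd j f) x) + Uβ x * f x)
      = (∑ i, ((S x).adjugate i β / (S x).det) *
          pd i (pd i (fun y => (∑ j, ((S y).adjugate j α / (S y).det) * pd j (pd j f) y)
            + Uα y * f y)) x)
        + Uβ x * ((∑ j, ((S x).adjugate j α / (S x).det) * pd j (pd j f) x) + Uα x * f x)) :
    (∀ s, ∀ x ∈ W,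
        ((S x).adjugate s α / (S x).det) * pd s Uβ x
          - ((S x).adjugate s β / (S x).det) * pd s Uα x = 0)
    ∧ (∀ x ∈ W, ∀ p : Fin n → ℝ,
        pbr (fun y q => (∑ i, ((S y).adjugate i α / (S y).det) * (q i) ^ 2) + Uα y)
            (fun y q => (∑ i, ((S y).adjugate i β / (S y).det) * (q i) ^ 2) + Uβ y) x p = 0) := by
  have hk := key hW (fun i x => (S x).adjugate i α / (S x).det)
    (fun i x => (S x).adjugate i β / (S x).det)
    (fun i => contDiffOn_A hS hdet i α) (fun i => contDiffOn_A hS hdet i β)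
    Uα Uβ hUα hUβ hcomm
  constructor
  · intro s x hx
    exact (hk x hx).1 s
  · intro x hx p
    exact pbr_zero hW (fun i x => (S x).adjugate i α / (S x).det)
      (fun i x => (S x).adjugate i β / (S x).det)
      (fun i => contDiffOn_A hS hdet i α) (fun i => contDiffOn_A hS hdet i β)
      Uα Uβ hUα hUβ x hx (hk x hx).1 (hk x hx).2 p
end
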